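/- If the Markov chains Q → (S, T_1, T_2, X_1, X_2) → Y and Q → (S, T_1, T_2, X_1, X_2) → Z hold, and additionally Q → (S, T_1, T_2, Y) → Z holds, then I(X_1, X_2; Y | S, T_1, T_2, Q) − I(X_1, X_2; Z | S, T_1, T_2, Q) ≤ I(X_1, X_2; Y | S, T_1, T_2) − I(X_1, X_2; Z | S, T_1, T_2). -/
import Mathlib


open scoped BigOperators
attribute [local instance] Classical.propDecidable

/-- Probability of an event under a pmf `μ` on a finite sample space. -/
noncomputable def prb {Ω : Type*} [Fintype Ω] (μ : Ω → ℝ) (E : Ω → Prop) : ℝ :=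
  ∑ ω, if E ω then μ ω else 0

/-- `μ` is a probability mass function. -/
def IsPMF {Ω : Type*} [Fintype Ω] (μ : Ω → ℝ) : Prop :=
  (∀ ω, 0 ≤ μ ω) ∧ (∑ ω, μ ω) = 1

/-- Shannon entropy (base 2) of a random variable `X`. -/
noncomputable def entH {Ω : Type*} [Fintype Ω] (μ : Ω → ℝ) {α : Type*} [Fintype α]
    (X : Ω → α) : ℝ :=
  -∑ a, prb μ (fun ω => X ω = a) * Real.logb 2 (prb μ (fun ω => X ω = a))

/-- Conditional Shannon entropy `H(X | Y)`. -/
noncomputable def condEnt {Ω : Type*} [Fintype Ω] (μ : Ω → ℝ) {α β : Type*} [Fintype α]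
    [Fintype β] (X : Ω → α) (Y : Ω → β) : ℝ :=
  entH μ (fun ω => (X ω, Y ω)) - entH μ Y

/-- Conditional mutual information `I(X ; Y | Z)`. -/
noncomputable def condMI {Ω : Type*} [Fintype Ω] (μ : Ω → ℝ) {α β γ : Type*} [Fintype α]
    [Fintype β] [Fintype γ] (X : Ω → α) (Y : Ω → β) (Z : Ω → γ) : ℝ :=
  condEnt μ X Z - condEnt μ X (fun ω => (Y ω, Z ω))

/-- `A` and `C` are conditionally independent given `B` (Markov chain `A → B → C`). -/
def condIndep {Ω : Type*} [Fintype Ω] (μ : Ω → ℝ) {α β γ : Type*}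
    (A : Ω → α) (B : Ω → β) (C : Ω → γ) : Prop :=
  ∀ a b c, prb μ (fun ω => A ω = a ∧ B ω = b ∧ C ω = c) * prb μ (fun ω => B ω = b)
    = prb μ (fun ω => A ω = a ∧ B ω = b) * prb μ (fun ω => B ω = b ∧ C ω = c)

section Aux
variable {Ω : Type*} [Fintype Ω] (μ : Ω → ℝ)

lemma prb_congr {E F : Ω → Prop} (h : ∀ ω, E ω ↔ F ω) : prb μ E = prb μ F := by
  unfold prb
  exact Finset.sum_congr rfl fun ω _ => by simp [h ω]

lemma prb_nonneg (hμ : IsPMF μ) (E : Ω → Prop) : 0 ≤ prb μ E := by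
  unfold prb
  refine Finset.sum_nonneg fun ω _ => ?_
  by_cases h : E ω <;> simp [h, hμ.1 ω]

lemma prb_mono (hμ : IsPMF μ) {E F : Ω → Prop} (h : ∀ ω, E ω → F ω) :
    prb μ E ≤ prb μ F := by
  unfold prb
  refine Finset.sum_le_sum fun ω _ => ?_
  by_cases hE : E ω
  · simp [hE, h ω hE]
  · by_cases hF : F ω <;> simp [hE, hF, hμ.1 ω]

lemma prb_fiber {κ δ : Type*} [Fintype κ] (W : Ω → κ) (f : κ → δ) (d : δ) :
    prb μ (fun ω => f (W ω) = d)
      = ∑ w, if f w = d then prb μ (fun ω => W ω = w) else 0 := by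
  unfold prb
  have h : ∀ w : κ, (if f w = d then ∑ ω, if W ω = w then μ ω else 0 else 0)
      = ∑ ω, if W ω = w ∧ f w = d then μ ω else 0 := by
    intro w
    by_cases h : f w = d <;> simp [h]
  simp only [h]
  rw [Finset.sum_comm]
  refine Finset.sum_congr rfl fun ω _ => ?_
  simp only [ite_and]
  rw [Finset.sum_ite_eq Finset.univ (W ω) (fun w => if f w = d then μ ω else 0)]
  simp

lemma sum_prb_and {α : Type*} [Fintype α] (A : Ω → α) (P : Ω → Prop) :
    ∑ a, prb μ (fun ω => A ω = a ∧ P ω) = prb μ P := by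
  unfold prb
  rw [Finset.sum_comm]
  refine Finset.sum_congr rfl fun ω _ => ?_
  by_cases h : P ω <;> simp [h]

lemma sum_prb_eq_one {α : Type*} [Fintype α] (hμ : IsPMF μ) (A : Ω → α) :
    ∑ a, prb μ (fun ω => A ω = a) = 1 := by
  unfold prb
  rw [Finset.sum_comm, ← hμ.2]
  refine Finset.sum_congr rfl fun ω _ => ?_
  simp

end Aux
section Ent
variable {Ω : Type*} [Fintype Ω] (μ : Ω → ℝ)

lemma entH_comp {κ δ : Type*} [Fintype κ] [Fintype δ] (W : Ω → κ) (f : κ → δ) :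
    entH μ (fun ω => f (W ω)) =
      -∑ w, prb μ (fun ω => W ω = w) * Real.logb 2 (prb μ (fun ω => f (W ω) = f w)) := by
  unfold entH
  congr 1
  have h1 : ∀ d : δ, prb μ (fun ω => f (W ω) = d) * Real.logb 2 (prb μ (fun ω => f (W ω) = d))
      = ∑ w, if f w = d then prb μ (fun ω => W ω = w)
          * Real.logb 2 (prb μ (fun ω => f (W ω) = d)) else 0 := by
    intro d
    rw [prb_fiber μ W f d, Finset.sum_mul]
    exact Finset.sum_congr rfl fun w _ => by by_cases h : f w = d <;> simp [h]
  simp only [h1]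
  rw [Finset.sum_comm]
  refine Finset.sum_congr rfl fun w _ => ?_
  rw [Finset.sum_ite_eq Finset.univ (f w)
    (fun d => prb μ (fun ω => W ω = w) * Real.logb 2 (prb μ (fun ω => f (W ω) = d)))]
  simp

lemma entH_comp_inj {α β : Type*} [Fintype α] [Fintype β] (X : Ω → α) (f : α → β)
    (hf : Function.Injective f) :
    entH μ (fun ω => f (X ω)) = entH μ X := by
  rw [entH_comp μ X f]
  unfold entH
  congr 1
  refine Finset.sum_congr rfl fun a _ => ?_
  rw [prb_congr μ (fun ω => (hf.eq_iff (a := X ω) (b := a)))]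

end Ent
section MI
variable {Ω : Type*} [Fintype Ω] (μ : Ω → ℝ)

lemma condMI_eq_sum {α β γ : Type*} [Fintype α] [Fintype β] [Fintype γ]
    (A : Ω → α) (B : Ω → β) (C : Ω → γ) :
    condMI μ A C B = ∑ w : α × β × γ,
      prb μ (fun ω => (A ω, B ω, C ω) = w) *
        (Real.logb 2 (prb μ (fun ω => (A ω, B ω, C ω) = w))
          + Real.logb 2 (prb μ (fun ω => B ω = w.2.1))
          - Real.logb 2 (prb μ (fun ω => (A ω, B ω) = (w.1, w.2.1)))
          - Real.logb 2 (prb μ (fun ω => (C ω, B ω) = (w.2.2, w.2.1)))) := by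
  have h1 : entH μ (fun ω => (A ω, B ω))
      = -∑ w : α × β × γ, prb μ (fun ω => (A ω, B ω, C ω) = w)
          * Real.logb 2 (prb μ (fun ω => (A ω, B ω) = (w.1, w.2.1))) :=
    entH_comp μ (fun ω => (A ω, B ω, C ω)) (fun w => (w.1, w.2.1))
  have h2 : entH μ B
      = -∑ w : α × β × γ, prb μ (fun ω => (A ω, B ω, C ω) = w)
          * Real.logb 2 (prb μ (fun ω => B ω = w.2.1)) :=
    entH_comp μ (fun ω => (A ω, B ω, C ω)) (fun w => w.2.1)
  have h3 : entH μ (fun ω => (C ω, B ω))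
      = -∑ w : α × β × γ, prb μ (fun ω => (A ω, B ω, C ω) = w)
          * Real.logb 2 (prb μ (fun ω => (C ω, B ω) = (w.2.2, w.2.1))) :=
    entH_comp μ (fun ω => (A ω, B ω, C ω)) (fun w => (w.2.2, w.2.1))
  have h4 : entH μ (fun ω => (A ω, (C ω, B ω)))
      = -∑ w : α × β × γ, prb μ (fun ω => (A ω, B ω, C ω) = w)
          * Real.logb 2 (prb μ (fun ω => (A ω, (C ω, B ω)) = (w.1, (w.2.2, w.2.1)))) :=
    entH_comp μ (fun ω => (A ω, B ω, C ω)) (fun w => (w.1, (w.2.2, w.2.1)))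
  have h4' : ∀ w : α × β × γ, prb μ (fun ω => (A ω, (C ω, B ω)) = (w.1, (w.2.2, w.2.1)))
      = prb μ (fun ω => (A ω, B ω, C ω) = w) := by
    intro w
    refine prb_congr μ fun ω => ?_
    constructor <;> intro h <;>
      · simp only [Prod.ext_iff] at h ⊢
        tauto
  simp only [h4'] at h4
  show entH μ (fun ω => (A ω, B ω)) - entH μ B
      - (entH μ (fun ω => (A ω, (C ω, B ω))) - entH μ (fun ω => (C ω, B ω))) = _
  rw [h1, h2, h3, h4]
  simp only [mul_add, mul_sub, Finset.sum_add_distrib, Finset.sum_sub_distrib]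
  ring

end MI
section Core
variable {Ω : Type*} [Fintype Ω] (μ : Ω → ℝ)

lemma condMI_eq_zero_of_condIndep {α β γ : Type*} [Fintype α] [Fintype β] [Fintype γ]
    (hμ : IsPMF μ) (A : Ω → α) (B : Ω → β) (C : Ω → γ) (h : condIndep μ A B C) :
    condMI μ A C B = 0 := by
  rw [condMI_eq_sum]
  refine Finset.sum_eq_zero fun w _ => ?_
  obtain ⟨a, b, c⟩ := w
  by_cases hp : prb μ (fun ω => (A ω, B ω, C ω) = (a, b, c)) = 0
  · rw [hp]; ring
  set p := prb μ (fun ω => (A ω, B ω, C ω) = (a, b, c)) with hpdef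
  have hpe : p = prb μ (fun ω => A ω = a ∧ B ω = b ∧ C ω = c) :=
    prb_congr μ fun ω => by simp [Prod.ext_iff]
  have hABe : prb μ (fun ω => (A ω, B ω) = (a, b)) = prb μ (fun ω => A ω = a ∧ B ω = b) :=
    prb_congr μ fun ω => by simp [Prod.ext_iff]
  have hCBe : prb μ (fun ω => (C ω, B ω) = (c, b)) = prb μ (fun ω => B ω = b ∧ C ω = c) :=
    prb_congr μ fun ω => by simp [Prod.ext_iff]; tauto
  have hppos : 0 < p := lt_of_le_of_ne (prb_nonneg μ hμ _) (Ne.symm hp)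
  have hB : p ≤ prb μ (fun ω => B ω = b) := by
    refine prb_mono μ hμ fun ω hω => ?_
    simp [Prod.ext_iff] at hω; tauto
  have hAB : p ≤ prb μ (fun ω => (A ω, B ω) = (a, b)) := by
    refine prb_mono μ hμ fun ω hω => ?_
    simp [Prod.ext_iff] at hω ⊢; tauto
  have hCB : p ≤ prb μ (fun ω => (C ω, B ω) = (c, b)) := by
    refine prb_mono μ hμ fun ω hω => ?_
    simp [Prod.ext_iff] at hω ⊢; tauto
  have hBpos : 0 < prb μ (fun ω => B ω = b) := lt_of_lt_of_le hppos hB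
  have hABpos : 0 < prb μ (fun ω => (A ω, B ω) = (a, b)) := lt_of_lt_of_le hppos hAB
  have hCBpos : 0 < prb μ (fun ω => (C ω, B ω) = (c, b)) := lt_of_lt_of_le hppos hCB
  have key : p * prb μ (fun ω => B ω = b)
      = prb μ (fun ω => (A ω, B ω) = (a, b)) * prb μ (fun ω => (C ω, B ω) = (c, b)) := by
    rw [hpe, hABe, hCBe]; exact h a b c
  have hlog : Real.logb 2 p + Real.logb 2 (prb μ (fun ω => B ω = b))
      - Real.logb 2 (prb μ (fun ω => (A ω, B ω) = (a, b)))
      - Real.logb 2 (prb μ (fun ω => (C ω, B ω) = (c, b))) = 0 := by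
    rw [← Real.logb_mul (ne_of_gt hppos) (ne_of_gt hBpos)]
    rw [sub_sub, ← Real.logb_mul (ne_of_gt hABpos) (ne_of_gt hCBpos)]
    rw [key]; ring
  simpa using Or.inr hlog

lemma condMI_nonneg {α β γ : Type*} [Fintype α] [Fintype β] [Fintype γ]
    (hμ : IsPMF μ) (A : Ω → α) (B : Ω → β) (C : Ω → γ) :
    0 ≤ condMI μ A C B := by
  rw [condMI_eq_sum]
  set pf := fun w : α × β × γ => prb μ (fun ω => (A ω, B ω, C ω) = w) with hpf
  set u := fun w : α × β × γ => prb μ (fun ω => (A ω, B ω) = (w.1, w.2.1))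
      * prb μ (fun ω => (C ω, B ω) = (w.2.2, w.2.1)) / prb μ (fun ω => B ω = w.2.1) with hu
  have hlog2 : (0:ℝ) < Real.log 2 := Real.log_pos (by norm_num)
  have hterm : ∀ w : α × β × γ, (pf w - u w) / Real.log 2 ≤
      pf w * (Real.logb 2 (pf w)
          + Real.logb 2 (prb μ (fun ω => B ω = w.2.1))
          - Real.logb 2 (prb μ (fun ω => (A ω, B ω) = (w.1, w.2.1)))
          - Real.logb 2 (prb μ (fun ω => (C ω, B ω) = (w.2.2, w.2.1)))) := by
    intro w
    by_cases hp : pf w = 0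
    · rw [hp]
      have hu0 : 0 ≤ u w := by
        rw [hu]
        exact div_nonneg (mul_nonneg (prb_nonneg μ hμ _) (prb_nonneg μ hμ _)) (prb_nonneg μ hμ _)
      have h0 : (0 - u w) / Real.log 2 ≤ 0 :=
        div_nonpos_of_nonpos_of_nonneg (by linarith) (le_of_lt hlog2)
      simpa using h0
    · have hppos : 0 < pf w := lt_of_le_of_ne (prb_nonneg μ hμ _) (Ne.symm hp)
      have hB : pf w ≤ prb μ (fun ω => B ω = w.2.1) := by
        refine prb_mono μ hμ fun ω hω => ?_
        simp [Prod.ext_iff] at hω ⊢; tauto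
      have hAB : pf w ≤ prb μ (fun ω => (A ω, B ω) = (w.1, w.2.1)) := by
        refine prb_mono μ hμ fun ω hω => ?_
        simp [Prod.ext_iff] at hω ⊢; tauto
      have hCB : pf w ≤ prb μ (fun ω => (C ω, B ω) = (w.2.2, w.2.1)) := by
        refine prb_mono μ hμ fun ω hω => ?_
        simp [Prod.ext_iff] at hω ⊢; tauto
      have hBpos : 0 < prb μ (fun ω => B ω = w.2.1) := lt_of_lt_of_le hppos hB
      have hABpos : 0 < prb μ (fun ω => (A ω, B ω) = (w.1, w.2.1)) := lt_of_lt_of_le hppos hAB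
      have hCBpos : 0 < prb μ (fun ω => (C ω, B ω) = (w.2.2, w.2.1)) := lt_of_lt_of_le hppos hCB
      have hupos : 0 < u w := by
        rw [hu]; exact div_pos (mul_pos hABpos hCBpos) hBpos
      have hlogle : Real.log (u w / pf w) ≤ u w / pf w - 1 :=
        Real.log_le_sub_one_of_pos (div_pos hupos hppos)
      have hexp : Real.log (u w / pf w) = Real.log (prb μ (fun ω => (A ω, B ω) = (w.1, w.2.1)))
          + Real.log (prb μ (fun ω => (C ω, B ω) = (w.2.2, w.2.1)))
          - Real.log (prb μ (fun ω => B ω = w.2.1)) - Real.log (pf w) := by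
        rw [hu]
        rw [Real.log_div (by positivity) (ne_of_gt hppos),
            Real.log_div (by positivity) (ne_of_gt hBpos),
            Real.log_mul (ne_of_gt hABpos) (ne_of_gt hCBpos)]
      have hmain : pf w - u w ≤ pf w * (Real.log (pf w)
          + Real.log (prb μ (fun ω => B ω = w.2.1))
          - Real.log (prb μ (fun ω => (A ω, B ω) = (w.1, w.2.1)))
          - Real.log (prb μ (fun ω => (C ω, B ω) = (w.2.2, w.2.1)))) := by
        have h2 : Real.log (pf w) + Real.log (prb μ (fun ω => B ω = w.2.1))
            - Real.log (prb μ (fun ω => (A ω, B ω) = (w.1, w.2.1)))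
            - Real.log (prb μ (fun ω => (C ω, B ω) = (w.2.2, w.2.1)))
            = -Real.log (u w / pf w) := by rw [hexp]; ring
        rw [h2]
        have h3 : Real.log (u w / pf w) * pf w ≤ (u w / pf w - 1) * pf w :=
          mul_le_mul_of_nonneg_right hlogle (le_of_lt hppos)
        have h4 : (u w / pf w - 1) * pf w = u w - pf w := by
          field_simp
        nlinarith [h3, h4]
      calc (pf w - u w) / Real.log 2
          ≤ (pf w * (Real.log (pf w)
              + Real.log (prb μ (fun ω => B ω = w.2.1))
              - Real.log (prb μ (fun ω => (A ω, B ω) = (w.1, w.2.1)))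
              - Real.log (prb μ (fun ω => (C ω, B ω) = (w.2.2, w.2.1))))) / Real.log 2 := by
            gcongr
        _ = pf w * (Real.logb 2 (pf w)
              + Real.logb 2 (prb μ (fun ω => B ω = w.2.1))
              - Real.logb 2 (prb μ (fun ω => (A ω, B ω) = (w.1, w.2.1)))
              - Real.logb 2 (prb μ (fun ω => (C ω, B ω) = (w.2.2, w.2.1)))) := by
            unfold Real.logb; ring
  have hpf1 : ∑ w : α × β × γ, pf w = 1 :=
    sum_prb_eq_one μ hμ (fun ω => (A ω, B ω, C ω))
  have hAsum : ∀ b : β, ∑ a, prb μ (fun ω => (A ω, B ω) = (a, b))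
      = prb μ (fun ω => B ω = b) := by
    intro b
    rw [← sum_prb_and μ A (fun ω => B ω = b)]
    exact Finset.sum_congr rfl fun a _ => prb_congr μ fun ω => by simp [Prod.ext_iff]
  have hCsum : ∀ b : β, ∑ c, prb μ (fun ω => (C ω, B ω) = (c, b))
      = prb μ (fun ω => B ω = b) := by
    intro b
    rw [← sum_prb_and μ C (fun ω => B ω = b)]
    exact Finset.sum_congr rfl fun c _ => prb_congr μ fun ω => by simp [Prod.ext_iff]
  have hu1 : ∑ w : α × β × γ, u w = 1 := by
    have hrw : ∀ w : α × β × γ, u w = prb μ (fun ω => (A ω, B ω) = (w.1, w.2.1)) *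
        (prb μ (fun ω => (C ω, B ω) = (w.2.2, w.2.1)) / prb μ (fun ω => B ω = w.2.1)) := by
      intro w; rw [hu]; ring
    simp only [hrw]
    rw [Fintype.sum_prod_type]
    simp only [Fintype.sum_prod_type]
    rw [Finset.sum_comm]
    have hb : ∀ b : β, (∑ a, ∑ c, prb μ (fun ω => (A ω, B ω) = (a, b)) *
        (prb μ (fun ω => (C ω, B ω) = (c, b)) / prb μ (fun ω => B ω = b)))
        = prb μ (fun ω => B ω = b) := by
      intro b
      have : ∀ a, (∑ c, prb μ (fun ω => (A ω, B ω) = (a, b)) *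
          (prb μ (fun ω => (C ω, B ω) = (c, b)) / prb μ (fun ω => B ω = b)))
          = prb μ (fun ω => (A ω, B ω) = (a, b)) *
            (prb μ (fun ω => B ω = b) / prb μ (fun ω => B ω = b)) := by
        intro a
        rw [← Finset.mul_sum, ← Finset.sum_div, hCsum b]
      simp only [this]
      rw [← Finset.sum_mul, hAsum b]
      by_cases hb0 : prb μ (fun ω => B ω = b) = 0
      · rw [hb0]; simp
      · rw [div_self hb0, mul_one]
    simp only [hb]
    exact sum_prb_eq_one μ hμ B
  have hsum_le : ∑ w : α × β × γ, (pf w - u w) / Real.log 2 ≤ ∑ w : α × β × γ,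
      pf w * (Real.logb 2 (pf w)
          + Real.logb 2 (prb μ (fun ω => B ω = w.2.1))
          - Real.logb 2 (prb μ (fun ω => (A ω, B ω) = (w.1, w.2.1)))
          - Real.logb 2 (prb μ (fun ω => (C ω, B ω) = (w.2.2, w.2.1)))) :=
    Finset.sum_le_sum fun w _ => hterm w
  have hzero : ∑ w : α × β × γ, (pf w - u w) / Real.log 2 = 0 := by
    rw [← Finset.sum_div, Finset.sum_sub_distrib, hpf1, hu1]
    simp
  linarith [hsum_le, hzero]

end Core
section Relabel
variable {Ω : Type*} [Fintype Ω] (μ : Ω → ℝ)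

lemma condMI_third_comp {α β γ δ : Type*} [Fintype α] [Fintype β] [Fintype γ] [Fintype δ]
    (A : Ω → α) (B : Ω → β) (C : Ω → γ) (e : γ → δ) (he : Function.Injective e) :
    condMI μ A B (fun ω => e (C ω)) = condMI μ A B C := by
  unfold condMI condEnt
  have h1 : entH μ (fun ω => (A ω, e (C ω))) = entH μ (fun ω => (A ω, C ω)) :=
    entH_comp_inj μ (fun ω => (A ω, C ω)) (fun p => (p.1, e p.2))
      (fun p q h => by
        simp only [Prod.mk.injEq] at h
        exact Prod.ext h.1 (he h.2))
  have h2 : entH μ (fun ω => e (C ω)) = entH μ C := entH_comp_inj μ C e he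
  have h3 : entH μ (fun ω => (A ω, (B ω, e (C ω)))) = entH μ (fun ω => (A ω, (B ω, C ω))) :=
    entH_comp_inj μ (fun ω => (A ω, (B ω, C ω))) (fun p => (p.1, (p.2.1, e p.2.2)))
      (fun p q h => by
        simp only [Prod.mk.injEq] at h
        exact Prod.ext h.1 (Prod.ext h.2.1 (he h.2.2)))
  have h4 : entH μ (fun ω => (B ω, e (C ω))) = entH μ (fun ω => (B ω, C ω)) :=
    entH_comp_inj μ (fun ω => (B ω, C ω)) (fun p => (p.1, e p.2))
      (fun p q h => by
        simp only [Prod.mk.injEq] at h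
        exact Prod.ext h.1 (he h.2))
  rw [h1, h2, h3, h4]

lemma condIndep_middle_equiv {α β β' γ : Type*} (A : Ω → α) (B : Ω → β) (C : Ω → γ)
    (e : β ≃ β') (h : condIndep μ A B C) : condIndep μ A (fun ω => e (B ω)) C := by
  intro a b c
  have hb : ∀ ω, (e (B ω) = b) ↔ (B ω = e.symm b) := fun ω => by
    constructor
    · intro h'; rw [← h']; simp
    · intro h'; rw [h']; simp
  have e1 : prb μ (fun ω => A ω = a ∧ e (B ω) = b ∧ C ω = c)
      = prb μ (fun ω => A ω = a ∧ B ω = e.symm b ∧ C ω = c) :=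
    prb_congr μ fun ω => by rw [hb ω]
  have e2 : prb μ (fun ω => e (B ω) = b) = prb μ (fun ω => B ω = e.symm b) :=
    prb_congr μ fun ω => hb ω
  have e3 : prb μ (fun ω => A ω = a ∧ e (B ω) = b)
      = prb μ (fun ω => A ω = a ∧ B ω = e.symm b) :=
    prb_congr μ fun ω => by rw [hb ω]
  have e4 : prb μ (fun ω => e (B ω) = b ∧ C ω = c)
      = prb μ (fun ω => B ω = e.symm b ∧ C ω = c) :=
    prb_congr μ fun ω => by rw [hb ω]
  rw [e1, e2, e3, e4]
  exact h a (e.symm b) c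

end Relabel
section Key
variable {Ω : Type*} [Fintype Ω] (μ : Ω → ℝ)

lemma key_lemma {q τ x y z : Type*} [Fintype q] [Fintype τ] [Fintype x] [Fintype y] [Fintype z]
    (hμ : IsPMF μ) (Q : Ω → q) (T : Ω → τ) (X : Ω → x) (Y : Ω → y) (Z : Ω → z)
    (hQY : condIndep μ Q (fun ω => (T ω, X ω)) Y)
    (hQZ : condIndep μ Q (fun ω => (T ω, X ω)) Z)
    (hQYZ : condIndep μ Q (fun ω => (T ω, Y ω)) Z) :
    condMI μ X Y (fun ω => (T ω, Q ω)) - condMI μ X Z (fun ω => (T ω, Q ω))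
      ≤ condMI μ X Y T - condMI μ X Z T := by
  -- chain rule identity for Y
  have hAY : condMI μ X Y (fun ω => (T ω, Q ω)) - condMI μ X Y T
      = condMI μ Q Y (fun ω => (T ω, X ω)) - condMI μ Q Y T := by
    unfold condMI condEnt
    have E1 : entH μ (fun ω => (X ω, (T ω, Q ω))) = entH μ (fun ω => (Q ω, (T ω, X ω))) :=
      entH_comp_inj μ (fun ω => (Q ω, (T ω, X ω))) (fun p => (p.2.2, (p.2.1, p.1)))
        (fun p r h => by
          simp only [Prod.mk.injEq] at h
          exact Prod.ext h.2.2 (Prod.ext h.2.1 h.1))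
    have E2 : entH μ (fun ω => (T ω, Q ω)) = entH μ (fun ω => (Q ω, T ω)) :=
      entH_comp_inj μ (fun ω => (Q ω, T ω)) (fun p => (p.2, p.1))
        (fun p r h => by
          simp only [Prod.mk.injEq] at h
          exact Prod.ext h.2 h.1)
    have E3 : entH μ (fun ω => (X ω, (Y ω, (T ω, Q ω))))
        = entH μ (fun ω => (Q ω, (Y ω, (T ω, X ω)))) :=
      entH_comp_inj μ (fun ω => (Q ω, (Y ω, (T ω, X ω))))
        (fun p => (p.2.2.2, (p.2.1, (p.2.2.1, p.1))))
        (fun p r h => by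
          simp only [Prod.mk.injEq] at h
          exact Prod.ext h.2.2.2 (Prod.ext h.2.1 (Prod.ext h.2.2.1 h.1)))
    have E4 : entH μ (fun ω => (Y ω, (T ω, Q ω))) = entH μ (fun ω => (Q ω, (Y ω, T ω))) :=
      entH_comp_inj μ (fun ω => (Q ω, (Y ω, T ω))) (fun p => (p.2.1, (p.2.2, p.1)))
        (fun p r h => by
          simp only [Prod.mk.injEq] at h
          exact Prod.ext h.2.2 (Prod.ext h.1 h.2.1))
    have E5 : entH μ (fun ω => (X ω, T ω)) = entH μ (fun ω => (T ω, X ω)) :=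
      entH_comp_inj μ (fun ω => (T ω, X ω)) (fun p => (p.2, p.1))
        (fun p r h => by
          simp only [Prod.mk.injEq] at h
          exact Prod.ext h.2 h.1)
    have E6 : entH μ (fun ω => (X ω, (Y ω, T ω))) = entH μ (fun ω => (Q ω, (Y ω, (T ω, X ω))))
        → True := fun _ => trivial
    have E6' : entH μ (fun ω => (X ω, (Y ω, T ω))) = entH μ (fun ω => (Y ω, (T ω, X ω))) :=
      entH_comp_inj μ (fun ω => (Y ω, (T ω, X ω))) (fun p => (p.2.2, (p.1, p.2.1)))
        (fun p r h => by
          simp only [Prod.mk.injEq] at h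
          exact Prod.ext h.2.1 (Prod.ext h.2.2 h.1))
    rw [E1, E2, E3, E4, E5, E6']
    ring
  -- chain rule identity for Z
  have hAZ : condMI μ X Z (fun ω => (T ω, Q ω)) - condMI μ X Z T
      = condMI μ Q Z (fun ω => (T ω, X ω)) - condMI μ Q Z T := by
    unfold condMI condEnt
    have E1 : entH μ (fun ω => (X ω, (T ω, Q ω))) = entH μ (fun ω => (Q ω, (T ω, X ω))) :=
      entH_comp_inj μ (fun ω => (Q ω, (T ω, X ω))) (fun p => (p.2.2, (p.2.1, p.1)))
        (fun p r h => by
          simp only [Prod.mk.injEq] at h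
          exact Prod.ext h.2.2 (Prod.ext h.2.1 h.1))
    have E2 : entH μ (fun ω => (T ω, Q ω)) = entH μ (fun ω => (Q ω, T ω)) :=
      entH_comp_inj μ (fun ω => (Q ω, T ω)) (fun p => (p.2, p.1))
        (fun p r h => by
          simp only [Prod.mk.injEq] at h
          exact Prod.ext h.2 h.1)
    have E3 : entH μ (fun ω => (X ω, (Z ω, (T ω, Q ω))))
        = entH μ (fun ω => (Q ω, (Z ω, (T ω, X ω)))) :=
      entH_comp_inj μ (fun ω => (Q ω, (Z ω, (T ω, X ω))))
        (fun p => (p.2.2.2, (p.2.1, (p.2.2.1, p.1))))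
        (fun p r h => by
          simp only [Prod.mk.injEq] at h
          exact Prod.ext h.2.2.2 (Prod.ext h.2.1 (Prod.ext h.2.2.1 h.1)))
    have E4 : entH μ (fun ω => (Z ω, (T ω, Q ω))) = entH μ (fun ω => (Q ω, (Z ω, T ω))) :=
      entH_comp_inj μ (fun ω => (Q ω, (Z ω, T ω))) (fun p => (p.2.1, (p.2.2, p.1)))
        (fun p r h => by
          simp only [Prod.mk.injEq] at h
          exact Prod.ext h.2.2 (Prod.ext h.1 h.2.1))
    have E5 : entH μ (fun ω => (X ω, T ω)) = entH μ (fun ω => (T ω, X ω)) :=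
      entH_comp_inj μ (fun ω => (T ω, X ω)) (fun p => (p.2, p.1))
        (fun p r h => by
          simp only [Prod.mk.injEq] at h
          exact Prod.ext h.2 h.1)
    have E6' : entH μ (fun ω => (X ω, (Z ω, T ω))) = entH μ (fun ω => (Z ω, (T ω, X ω))) :=
      entH_comp_inj μ (fun ω => (Z ω, (T ω, X ω))) (fun p => (p.2.2, (p.1, p.2.1)))
        (fun p r h => by
          simp only [Prod.mk.injEq] at h
          exact Prod.ext h.2.1 (Prod.ext h.2.2 h.1))
    rw [E1, E2, E3, E4, E5, E6']
    ring
  have hY0 : condMI μ Q Y (fun ω => (T ω, X ω)) = 0 :=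
    condMI_eq_zero_of_condIndep μ hμ Q (fun ω => (T ω, X ω)) Y hQY
  have hZ0 : condMI μ Q Z (fun ω => (T ω, X ω)) = 0 :=
    condMI_eq_zero_of_condIndep μ hμ Q (fun ω => (T ω, X ω)) Z hQZ
  have hYZ0 : condMI μ Q Z (fun ω => (T ω, Y ω)) = 0 :=
    condMI_eq_zero_of_condIndep μ hμ Q (fun ω => (T ω, Y ω)) Z hQYZ
  -- second chain rule identity
  have hC : condMI μ Q Y T - condMI μ Q Z T
      = condMI μ Q Y (fun ω => (T ω, Z ω)) - condMI μ Q Z (fun ω => (T ω, Y ω)) := by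
    unfold condMI condEnt
    have F1 : entH μ (fun ω => (Q ω, (Z ω, T ω))) = entH μ (fun ω => (Q ω, (T ω, Z ω))) :=
      entH_comp_inj μ (fun ω => (Q ω, (T ω, Z ω))) (fun p => (p.1, (p.2.2, p.2.1)))
        (fun p r h => by
          simp only [Prod.mk.injEq] at h
          exact Prod.ext h.1 (Prod.ext h.2.2 h.2.1))
    have F2 : entH μ (fun ω => (Z ω, T ω)) = entH μ (fun ω => (T ω, Z ω)) :=
      entH_comp_inj μ (fun ω => (T ω, Z ω)) (fun p => (p.2, p.1))
        (fun p r h => by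
          simp only [Prod.mk.injEq] at h
          exact Prod.ext h.2 h.1)
    have F3 : entH μ (fun ω => (Q ω, (Y ω, T ω))) = entH μ (fun ω => (Q ω, (T ω, Y ω))) :=
      entH_comp_inj μ (fun ω => (Q ω, (T ω, Y ω))) (fun p => (p.1, (p.2.2, p.2.1)))
        (fun p r h => by
          simp only [Prod.mk.injEq] at h
          exact Prod.ext h.1 (Prod.ext h.2.2 h.2.1))
    have F4 : entH μ (fun ω => (Y ω, T ω)) = entH μ (fun ω => (T ω, Y ω)) :=
      entH_comp_inj μ (fun ω => (T ω, Y ω)) (fun p => (p.2, p.1))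
        (fun p r h => by
          simp only [Prod.mk.injEq] at h
          exact Prod.ext h.2 h.1)
    have F5 : entH μ (fun ω => (Q ω, (Y ω, (T ω, Z ω))))
        = entH μ (fun ω => (Q ω, (Z ω, (T ω, Y ω)))) :=
      entH_comp_inj μ (fun ω => (Q ω, (Z ω, (T ω, Y ω))))
        (fun p => (p.1, (p.2.2.2, (p.2.2.1, p.2.1))))
        (fun p r h => by
          simp only [Prod.mk.injEq] at h
          exact Prod.ext h.1 (Prod.ext h.2.2.2 (Prod.ext h.2.2.1 h.2.1)))
    have F6 : entH μ (fun ω => (Y ω, (T ω, Z ω))) = entH μ (fun ω => (Z ω, (T ω, Y ω))) :=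
      entH_comp_inj μ (fun ω => (Z ω, (T ω, Y ω))) (fun p => (p.2.2, (p.2.1, p.1)))
        (fun p r h => by
          simp only [Prod.mk.injEq] at h
          exact Prod.ext h.2.2 (Prod.ext h.2.1 h.1))
    rw [F1, F2, F3, F4, F5, F6]
    ring
  have hpos : 0 ≤ condMI μ Q Y (fun ω => (T ω, Z ω)) :=
    condMI_nonneg μ hμ Q (fun ω => (T ω, Z ω)) Y
  linarith [hAY, hAZ, hY0, hZ0, hYZ0, hC, hpos]

end Key
/-- If `Q → (S,T₁,T₂,X₁,X₂) → Y`, `Q → (S,T₁,T₂,X₁,X₂) → Z` and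
`Q → (S,T₁,T₂,Y) → Z` are Markov chains, then
`I(X₁,X₂;Y|S,T₁,T₂,Q) − I(X₁,X₂;Z|S,T₁,T₂,Q) ≤ I(X₁,X₂;Y|S,T₁,T₂) − I(X₁,X₂;Z|S,T₁,T₂)`. -/
theorem conditioning_reduces_secrecy_rate
    {Ω q s t₁ t₂ x₁ x₂ y z : Type*} [Fintype Ω] [Fintype q] [Fintype s] [Fintype t₁]
    [Fintype t₂] [Fintype x₁] [Fintype x₂] [Fintype y] [Fintype z]
    (μ : Ω → ℝ) (hμ : IsPMF μ)
    (Q : Ω → q) (S : Ω → s) (T₁ : Ω → t₁) (T₂ : Ω → t₂)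
    (X₁ : Ω → x₁) (X₂ : Ω → x₂) (Y : Ω → y) (Z : Ω → z)
    (hQY : condIndep μ Q (fun ω => (S ω, T₁ ω, T₂ ω, X₁ ω, X₂ ω)) Y)
    (hQZ : condIndep μ Q (fun ω => (S ω, T₁ ω, T₂ ω, X₁ ω, X₂ ω)) Z)
    (hQYZ : condIndep μ Q (fun ω => (S ω, T₁ ω, T₂ ω, Y ω)) Z) :
    condMI μ (fun ω => (X₁ ω, X₂ ω)) Y (fun ω => (S ω, T₁ ω, T₂ ω, Q ω))
        - condMI μ (fun ω => (X₁ ω, X₂ ω)) Z (fun ω => (S ω, T₁ ω, T₂ ω, Q ω))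
      ≤ condMI μ (fun ω => (X₁ ω, X₂ ω)) Y (fun ω => (S ω, T₁ ω, T₂ ω))
        - condMI μ (fun ω => (X₁ ω, X₂ ω)) Z (fun ω => (S ω, T₁ ω, T₂ ω)) := by
  have hQY' : condIndep μ Q (fun ω => ((S ω, T₁ ω, T₂ ω), (X₁ ω, X₂ ω))) Y :=
    condIndep_middle_equiv μ Q (fun ω => (S ω, T₁ ω, T₂ ω, X₁ ω, X₂ ω)) Y
      ⟨fun p => ((p.1, p.2.1, p.2.2.1), (p.2.2.2.1, p.2.2.2.2)),
       fun p => (p.1.1, p.1.2.1, p.1.2.2, p.2.1, p.2.2),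
       fun p => rfl, fun p => rfl⟩ hQY
  have hQZ' : condIndep μ Q (fun ω => ((S ω, T₁ ω, T₂ ω), (X₁ ω, X₂ ω))) Z :=
    condIndep_middle_equiv μ Q (fun ω => (S ω, T₁ ω, T₂ ω, X₁ ω, X₂ ω)) Z
      ⟨fun p => ((p.1, p.2.1, p.2.2.1), (p.2.2.2.1, p.2.2.2.2)),
       fun p => (p.1.1, p.1.2.1, p.1.2.2, p.2.1, p.2.2),
       fun p => rfl, fun p => rfl⟩ hQZ
  have hQYZ' : condIndep μ Q (fun ω => ((S ω, T₁ ω, T₂ ω), Y ω)) Z :=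
    condIndep_middle_equiv μ Q (fun ω => (S ω, T₁ ω, T₂ ω, Y ω)) Z
      ⟨fun p => ((p.1, p.2.1, p.2.2.1), p.2.2.2),
       fun p => (p.1.1, p.1.2.1, p.1.2.2, p.2),
       fun p => rfl, fun p => rfl⟩ hQYZ
  have hk := key_lemma μ hμ Q (fun ω => (S ω, T₁ ω, T₂ ω)) (fun ω => (X₁ ω, X₂ ω)) Y Z
    hQY' hQZ' hQYZ'
  have he3 : Function.Injective
      (fun p : s × t₁ × t₂ × q => ((p.1, p.2.1, p.2.2.1), p.2.2.2)) := by
    intro p r h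
    simp only [Prod.mk.injEq] at h
    obtain ⟨⟨h1, h2, h3⟩, h4⟩ := h
    exact Prod.ext h1 (Prod.ext h2 (Prod.ext h3 h4))
  have hY : condMI μ (fun ω => (X₁ ω, X₂ ω)) Y (fun ω => ((S ω, T₁ ω, T₂ ω), Q ω))
      = condMI μ (fun ω => (X₁ ω, X₂ ω)) Y (fun ω => (S ω, T₁ ω, T₂ ω, Q ω)) :=
    condMI_third_comp μ (fun ω => (X₁ ω, X₂ ω)) Y (fun ω => (S ω, T₁ ω, T₂ ω, Q ω))
      (fun p => ((p.1, p.2.1, p.2.2.1), p.2.2.2)) he3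
  have hZ : condMI μ (fun ω => (X₁ ω, X₂ ω)) Z (fun ω => ((S ω, T₁ ω, T₂ ω), Q ω))
      = condMI μ (fun ω => (X₁ ω, X₂ ω)) Z (fun ω => (S ω, T₁ ω, T₂ ω, Q ω)) :=
    condMI_third_comp μ (fun ω => (X₁ ω, X₂ ω)) Z (fun ω => (S ω, T₁ ω, T₂ ω, Q ω))
      (fun p => ((p.1, p.2.1, p.2.2.1), p.2.2.2)) he3
  rw [← hY, ← hZ]
  exact hk
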